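/- Let τ > 0, ħ > 0, ξ ∈ ℝ and C ∈ ℂ, and define Φ : ℝ → ℂ by Φ(x) = C * (1 − τ*x + τ²*x²)^{−1/2} * exp(i * (2*ξ/(τ*ħ*√3)) * (arctan((2*τ*x − 1)/√3) + π/6)). With (p̂ f)(x) = −i*ħ*√(1 − τ*x + τ²*x²) * (d/dx)(fun y => √(1 − τ*y + τ²*y²) * f(y))(x), the function Φ satisfies the second-order eigenvalue equation (p̂ (p̂ Φ))(x) = ξ² * Φ(x) for every real x; hence for any mass m ≠ 0 and potential V : ℝ → ℂ, (1/(2m)) * (p̂ (p̂ Φ))(x) + V(x) * Φ(x) = (ξ²/(2m) + V(x)) * Φ(x). -/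

import Mathlib

/-- The Hermitian position-deformed momentum operator
`(p̂ f)(x) = -i ħ √(w x) (√w · f)'(x)` with `w x = 1 - τ x + τ² x²`. -/
noncomputable def hermitianDeformedMomentum (τ hbar : ℝ) (f : ℝ → ℂ) (x : ℝ) : ℂ :=
  -Complex.I * (hbar : ℂ) * (Real.sqrt (1 - τ * x + τ ^ 2 * x ^ 2) : ℂ) *
    deriv (fun y => (Real.sqrt (1 - τ * y + τ ^ 2 * y ^ 2) : ℂ) * f y) x

/-- The deformed plane wave `Φ_ξ`. -/
noncomputable def deformedPlaneWave (τ hbar ξ : ℝ) (C : ℂ) (x : ℝ) : ℂ :=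
  C * (((1 - τ * x + τ ^ 2 * x ^ 2 : ℝ) ^ (-(1 / 2) : ℝ) : ℝ) : ℂ) *
    Complex.exp (Complex.I * ((2 * ξ / (τ * hbar * Real.sqrt 3) : ℝ) : ℂ) *
      ((Real.arctan ((2 * τ * x - 1) / Real.sqrt 3) + Real.pi / 6 : ℝ) : ℂ))

/-!
Writing `w x = 1 - τ x + τ² x²`, the operator is `p̂ f = -iħ √w (√w f)'`, so `p̂ f = ξ f` as soon as
`g = √w f` solves `g' = (iξ / (ħ w)) g`. For the plane wave, `√w Φ = C exp (i k θ)` with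
`θ x = arctan ((2τx - 1)/√3) + π/6`, and completing the square, `w = (3 + (2τx - 1)²)/4`, gives
`θ' = τ√3 / (2w)`; the constant `k = 2ξ/(τħ√3)` is exactly the one making `k θ' = ξ/(ħ w)`.
Since `p̂` is `ℂ`-linear, applying it twice yields `ξ²`.
-/

open Complex

noncomputable def deformationWeight (τ x : ℝ) : ℝ := 1 - τ * x + τ ^ 2 * x ^ 2

lemma deformationWeight_pos (τ x : ℝ) : 0 < deformationWeight τ x := by
  unfold deformationWeight
  nlinarith [sq_nonneg (2 * (τ * x) - 1)]

noncomputable def deformedPhase (τ x : ℝ) : ℝ :=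
  Real.arctan ((2 * τ * x - 1) / Real.sqrt 3) + Real.pi / 6

lemma hasDerivAt_deformedPhase (τ x : ℝ) :
    HasDerivAt (deformedPhase τ) (τ * Real.sqrt 3 / (2 * deformationWeight τ x)) x := by
  have h3 : Real.sqrt 3 ^ 2 = 3 := Real.sq_sqrt (by norm_num)
  have hw := (deformationWeight_pos τ x).ne'
  have hlin : HasDerivAt (fun y : ℝ => (2 * τ * y - 1) / Real.sqrt 3) (2 * τ / Real.sqrt 3) x := by
    simpa using (((hasDerivAt_id x).const_mul (2 * τ)).sub_const 1).div_const (Real.sqrt 3)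
  refine (hlin.arctan.add_const (Real.pi / 6)).congr_deriv ?_
  have hsq : 1 + ((2 * τ * x - 1) / Real.sqrt 3) ^ 2 = 4 * deformationWeight τ x / 3 := by
    rw [div_pow, h3, deformationWeight]; ring
  rw [hsq]
  field_simp
  rw [h3]
  ring

lemma sqrt_mul_deformedPlaneWave (τ hbar ξ : ℝ) (C : ℂ) (x : ℝ) :
    (Real.sqrt (deformationWeight τ x) : ℂ) * deformedPlaneWave τ hbar ξ C x
      = C * exp (I * ((2 * ξ / (τ * hbar * Real.sqrt 3) : ℝ) : ℂ) * (deformedPhase τ x : ℂ)) := by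
  have hinv : (Real.sqrt (deformationWeight τ x) : ℂ)
      * ((deformationWeight τ x ^ (-(1 / 2) : ℝ) : ℝ) : ℂ) = 1 := by
    rw [← ofReal_mul, Real.sqrt_eq_rpow, ← Real.rpow_add (deformationWeight_pos τ x)]
    norm_num
  rw [deformedPlaneWave, ← deformationWeight, ← deformedPhase]
  linear_combination
    (C * exp (I * ((2 * ξ / (τ * hbar * Real.sqrt 3) : ℝ) : ℂ) * (deformedPhase τ x : ℂ))) * hinv

lemma hermitianDeformedMomentum_eq_of_hasDerivAt {τ hbar ξ : ℝ} (hhbar : hbar ≠ 0) {f : ℝ → ℂ}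
    {x : ℝ} (hf : HasDerivAt (fun y => (Real.sqrt (deformationWeight τ y) : ℂ) * f y)
      (I * ((ξ / (hbar * deformationWeight τ x) : ℝ) : ℂ)
        * ((Real.sqrt (deformationWeight τ x) : ℂ) * f x)) x) :
    hermitianDeformedMomentum τ hbar f x = ξ * f x := by
  have hw := deformationWeight_pos τ x
  have hsq : (Real.sqrt (deformationWeight τ x) : ℂ) ^ 2 = deformationWeight τ x := by
    exact_mod_cast Real.sq_sqrt hw.le
  have hd : deriv (fun y => (Real.sqrt (1 - τ * y + τ ^ 2 * y ^ 2) : ℂ) * f y) x = _ := hf.deriv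
  rw [hermitianDeformedMomentum, hd, ← deformationWeight]
  have hw' : (deformationWeight τ x : ℂ) ≠ 0 := by exact_mod_cast hw.ne'
  have hhbar' : (hbar : ℂ) ≠ 0 := by exact_mod_cast hhbar
  push_cast
  field_simp
  linear_combination -((Real.sqrt (deformationWeight τ x) : ℂ) ^ 2 * ξ * f x) * I_sq + ξ * f x * hsq

lemma hermitianDeformedMomentum_const_mul (τ hbar : ℝ) (c : ℂ) (f : ℝ → ℂ) (x : ℝ) :
    hermitianDeformedMomentum τ hbar (fun y => c * f y) x
      = c * hermitianDeformedMomentum τ hbar f x := by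
  simp only [hermitianDeformedMomentum, mul_left_comm _ c, deriv_const_mul_field]

lemma hermitianDeformedMomentum_deformedPlaneWave {τ hbar : ℝ} (hτ : τ ≠ 0) (hhbar : hbar ≠ 0)
    (ξ : ℝ) (C : ℂ) (x : ℝ) :
    hermitianDeformedMomentum τ hbar (deformedPlaneWave τ hbar ξ C) x
      = ξ * deformedPlaneWave τ hbar ξ C x := by
  apply hermitianDeformedMomentum_eq_of_hasDerivAt hhbar
  simp only [sqrt_mul_deformedPlaneWave]
  have hk : 2 * ξ / (τ * hbar * Real.sqrt 3) * (τ * Real.sqrt 3 / (2 * deformationWeight τ x))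
      = ξ / (hbar * deformationWeight τ x) := by
    have := (deformationWeight_pos τ x).ne'
    have : Real.sqrt 3 ≠ 0 := by positivity
    field_simp
  refine ((((hasDerivAt_deformedPhase τ x).ofReal_comp.const_mul
    (I * ((2 * ξ / (τ * hbar * Real.sqrt 3) : ℝ) : ℂ))).cexp).const_mul C).congr_deriv ?_
  rw [← hk]
  push_cast
  ring

theorem deformed_plane_wave_energy_eigenfunction (τ hbar ξ : ℝ) (hτ : 0 < τ)
    (hhbar : 0 < hbar) (C : ℂ) :
    (∀ x : ℝ,
      hermitianDeformedMomentum τ hbar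
          (hermitianDeformedMomentum τ hbar (deformedPlaneWave τ hbar ξ C)) x
        = ((ξ : ℂ) ^ 2) * deformedPlaneWave τ hbar ξ C x) ∧
    (∀ (m : ℝ), m ≠ 0 → ∀ (V : ℝ → ℂ) (x : ℝ),
      (1 / (2 * (m : ℂ))) * hermitianDeformedMomentum τ hbar
          (hermitianDeformedMomentum τ hbar (deformedPlaneWave τ hbar ξ C)) x
        + V x * deformedPlaneWave τ hbar ξ C x
      = ((ξ : ℂ) ^ 2 / (2 * (m : ℂ)) + V x) * deformedPlaneWave τ hbar ξ C x) := by
  have hΦ : hermitianDeformedMomentum τ hbar (deformedPlaneWave τ hbar ξ C)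
      = fun y => (ξ : ℂ) * deformedPlaneWave τ hbar ξ C y :=
    funext (hermitianDeformedMomentum_deformedPlaneWave hτ.ne' hhbar.ne' ξ C)
  have hsq (x : ℝ) : hermitianDeformedMomentum τ hbar
      (hermitianDeformedMomentum τ hbar (deformedPlaneWave τ hbar ξ C)) x
        = (ξ : ℂ) ^ 2 * deformedPlaneWave τ hbar ξ C x := by
    rw [hΦ, hermitianDeformedMomentum_const_mul,
      hermitianDeformedMomentum_deformedPlaneWave hτ.ne' hhbar.ne']
    ring
  exact ⟨hsq, fun m _ V x => by rw [hsq]; ring⟩
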